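/- arXiv:1910.02816 — 3 statements merged into one kernel-verified Lean document; each statement's English description precedes it below -/
import Mathlib

section
/- Let C ⊆ [n] and S ⊆ [n]. The rank function r_C of the Schubert matroid SM_n(C) satisfies r_C(S) = max{|F| : F a column-strict flagged filling of C with values in S}, where |F| is the number of filled boxes. -/
open scoped Classical

/-- Domination order: `T ≤ C` iff equal cardinality and the `i`-th smallest
element of `T` is at most the `i`-th smallest element of `C`. -/
def SchubertDom {n : ℕ} (T C : Finset (Fin n)) : Prop :=
  List.Forall₂ (· ≤ ·) (T.sort (· ≤ ·)) (C.sort (· ≤ ·))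

/-- The rank function of the Schubert matroid `SM_n(C)`:
`r_C(S) = max{#(S ∩ B) : B ≤ C}`. -/
noncomputable def schubertRank {n : ℕ} (C S : Finset (Fin n)) : ℕ :=
  ((Finset.univ : Finset (Finset (Fin n))).filter (fun B => SchubertDom B C)).sup
    (fun B => (S ∩ B).card)

/-!
A set `B` is dominated by `C` exactly when it is the image of `C` under an injective map `G`
with `G c ≤ c`: pair the `i`-th smallest elements, and conversely compare, for `x` the `i`-th
element of `C`, how many elements of `C` and of `G '' C` lie below `x`. Such a `G`, restricted to
the rows it sends into `S`, is a flagged filling with `#(S ∩ B)` boxes. Conversely, a flagged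
filling extends, taking the rows in increasing order, to such a `G` on all of `C` whose image contains
every value of the filling, so `#(S ∩ G '' C)` is at least the number of filled boxes.
-/

namespace Finset

theorem card_inter_image_of_injOn {α β : Type*} [DecidableEq β] {G : α → β} {C : Finset α}
    (S : Finset β) (hinj : Set.InjOn G C) : #(S ∩ C.image G) = #(C.filter (G · ∈ S)) := by
  rw [inter_comm, ← filter_mem_eq_inter, filter_image,
    card_image_of_injOn (hinj.mono (filter_subset _ _))]

variable {α : Type*} [LinearOrder α]

theorem forall₂_sort_le_iff {B C : Finset α} :
    List.Forall₂ (· ≤ ·) (B.sort (· ≤ ·)) (C.sort (· ≤ ·)) ↔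
      ∃ h : #B = #C, ∀ i, B.orderEmbOfFin h i ≤ C.orderEmbOfFin rfl i := by
  simp only [List.forall₂_iff_get, length_sort, List.get_eq_getElem, orderEmbOfFin_apply]
  exact ⟨fun ⟨h, hle⟩ => ⟨h, fun i => hle i (by omega) i.2⟩,
    fun ⟨h, hle⟩ => ⟨h, fun i _ hi => hle ⟨i, hi⟩⟩⟩

theorem card_filter_le_orderEmbOfFin (s : Finset α) {k : ℕ} (h : #s = k) (i : Fin k) :
    #(s.filter (· ≤ s.orderEmbOfFin h i)) = i + 1 := by
  set e := s.orderEmbOfFin h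
  rw [← map_orderEmbOfFin_univ s h, filter_map]
  simp [e, filter_ge_eq_Iic]

theorem card_filter_lt_orderEmbOfFin (s : Finset α) {k : ℕ} (h : #s = k) (i : Fin k) :
    #(s.filter (· < s.orderEmbOfFin h i)) = i := by
  set e := s.orderEmbOfFin h
  rw [← map_orderEmbOfFin_univ s h, filter_map]
  simp [e, filter_gt_eq_Iio]

theorem exists_injOn_le_image_eq_of_orderEmbOfFin_le {B C : Finset α} {k : ℕ} (hB : #B = k) (hC : #C = k)
    (hle : ∀ i, B.orderEmbOfFin hB i ≤ C.orderEmbOfFin hC i) :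
    ∃ G : α → α, Set.InjOn G C ∧ (∀ c ∈ C, G c ≤ c) ∧ C.image G = B := by
  set eB := B.orderEmbOfFin hB
  set eC := C.orderEmbOfFin hC
  have hG (i : Fin k) : Function.extend eC eB id (eC i) = eB i := eC.injective.extend_apply _ _ _
  have hC : C = univ.image eC := (image_orderEmbOfFin_univ C hC).symm
  refine ⟨Function.extend eC eB id, ?_, ?_, ?_⟩
  · rw [hC, coe_image, coe_univ, Set.image_univ]
    rintro _ ⟨i, rfl⟩ _ ⟨j, rfl⟩ hij
    rw [hG, hG] at hij
    rw [eB.injective hij]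
  · rw [hC]
    simpa [hG] using hle
  · rw [hC, image_image]
    simp [Function.comp_def, hG, eB]

theorem orderEmbOfFin_image_le {G : α → α} {C : Finset α} (hinj : Set.InjOn G C)
    (hle : ∀ c ∈ C, G c ≤ c) (i : Fin #C) :
    (C.image G).orderEmbOfFin (card_image_of_injOn hinj) i ≤ C.orderEmbOfFin rfl i := by
  set x := C.orderEmbOfFin rfl i
  by_contra! hx
  have hC : #(C.filter (· ≤ x)) ≤ #((C.image G).filter (· ≤ x)) := by
    refine card_le_card_of_injOn G (fun c hc => ?_) (hinj.mono (filter_subset _ _))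
    rw [coe_filter] at hc
    exact mem_filter.2 ⟨mem_image_of_mem G hc.1, (hle c hc.1).trans hc.2⟩
  have hB : #((C.image G).filter (· ≤ x)) ≤
      #((C.image G).filter (· < (C.image G).orderEmbOfFin (card_image_of_injOn hinj) i)) :=
    card_le_card (monotone_filter_right _ fun _ _ hy => hy.trans_lt hx)
  rw [card_filter_le_orderEmbOfFin] at hC
  rw [card_filter_lt_orderEmbOfFin] at hB
  omega

theorem exists_injOn_le_image_subset_image [LocallyFiniteOrderBot α] {R C : Finset α} {F : α → α}
    (hRC : R ⊆ C) (hinj : Set.InjOn F R) (hle : ∀ i ∈ R, F i ≤ i) :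
    ∃ G : α → α, Set.InjOn G C ∧ (∀ c ∈ C, G c ≤ c) ∧ R.image F ⊆ C.image G := by
  induction C using induction_on_max generalizing R with
  | empty => exact ⟨id, by simp, by simp, by simp [subset_empty.1 hRC]⟩
  | insert a C haC ih =>
    have ha : a ∉ C := fun h => lt_irrefl a (haC a h)
    obtain ⟨G, hGinj, hGle, hFG⟩ := ih (R := R.erase a)
      (fun i hi => (mem_insert.1 (hRC (mem_of_mem_erase hi))).resolve_left (ne_of_mem_erase hi))
      (hinj.mono (erase_subset a R)) (fun i hi => hle i (mem_of_mem_erase hi))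
    -- `a` is the largest row, so `Iic a` has more values than `C`: one is missed by `G`.
    -- Prefer `F a`, the only value of the filling that may not be covered yet.
    obtain ⟨w, hwa, hwG, hwF⟩ :
        ∃ w ≤ a, w ∉ C.image G ∧ (a ∈ R → F a ∉ C.image G → w = F a) := by
      by_cases hFa : a ∈ R ∧ F a ∉ C.image G
      · exact ⟨F a, hle a hFa.1, hFa.2, fun _ _ => rfl⟩
      · have hcard : #(C.image G) < #(Iic a) := calc
            #(C.image G) ≤ #C := card_image_le
            _ < #(insert a C) := by rw [card_insert_of_notMem ha]; omega
            _ ≤ #(Iic a) := card_le_card fun x hx =>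
              mem_Iic.2 ((mem_insert.1 hx).elim le_of_eq fun hx => (haC x hx).le)
        obtain ⟨w, hw, hwG⟩ := exists_mem_notMem_of_card_lt_card hcard
        exact ⟨w, mem_Iic.1 hw, hwG, fun hR hF => absurd ⟨hR, hF⟩ hFa⟩
    have hGC : Set.EqOn (Function.update G a w) G C := fun x hx =>
      Function.update_of_ne (ne_of_mem_of_not_mem hx ha) _ _
    have himage : (insert a C).image (Function.update G a w) = insert w (C.image G) := by
      rw [image_insert, Function.update_self, image_congr hGC]
    refine ⟨Function.update G a w, ?_, ?_, ?_⟩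
    · rw [coe_insert, Set.injOn_insert (mem_coe.not.2 ha), hGC.image_eq, ← coe_image,
        Function.update_self]
      exact ⟨hGinj.congr hGC.symm, hwG⟩
    · simp only [forall_mem_insert, Function.update_self]
      exact ⟨hwa, fun c hc => hGC hc ▸ hGle c hc⟩
    · rw [himage]
      intro y hy
      obtain ⟨i, hi, rfl⟩ := mem_image.1 hy
      by_cases hia : i = a
      · subst hia
        by_cases hFi : F i ∈ C.image G
        · exact mem_insert_of_mem hFi
        · exact hwF hi hFi ▸ mem_insert_self _ _
      · exact mem_insert_of_mem (hFG (mem_image_of_mem F (mem_erase.2 ⟨hia, hi⟩)))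

end Finset

open Finset

theorem schubertDom_iff {n : ℕ} {B C : Finset (Fin n)} :
    SchubertDom B C ↔
      ∃ G : Fin n → Fin n, Set.InjOn G C ∧ (∀ c ∈ C, G c ≤ c) ∧ C.image G = B := by
  rw [SchubertDom, forall₂_sort_le_iff]
  constructor
  · rintro ⟨h, hle⟩
    exact exists_injOn_le_image_eq_of_orderEmbOfFin_le h rfl hle
  · rintro ⟨G, hinj, hle, rfl⟩
    exact ⟨card_image_of_injOn hinj, orderEmbOfFin_image_le hinj hle⟩

/-- The rank `r_C(S)` of `S` in the Schubert matroid `SM_n(C)` equals the maximal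
number of filled boxes of a column-strict flagged filling of the column `C`
with values in `S`. -/
theorem schubertRank_eq_max_filling (n : ℕ) (C S : Finset (Fin n)) :
    schubertRank C S =
      ((Finset.univ : Finset (Finset (Fin n))).filter
        (fun R => R ⊆ C ∧ ∃ F : Fin n → Fin n,
          Set.InjOn F R ∧ (∀ i ∈ R, F i ∈ S) ∧ (∀ i ∈ R, F i ≤ i))).sup
        Finset.card := by
  refine le_antisymm (Finset.sup_le fun B hB => ?_) (Finset.sup_le fun R hR => ?_)
  · obtain ⟨G, hGinj, hGle, rfl⟩ := schubertDom_iff.1 (mem_filter.1 hB).2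
    rw [card_inter_image_of_injOn S hGinj]
    refine le_sup (f := card) (mem_filter.2 ⟨mem_univ _, filter_subset _ _, G, ?_, ?_, ?_⟩)
    · exact hGinj.mono (filter_subset _ _)
    · exact fun i hi => (mem_filter.1 hi).2
    · exact fun i hi => hGle i (mem_of_mem_filter i hi)
  · obtain ⟨hRC, F, hFinj, hFS, hFle⟩ := (mem_filter.1 hR).2
    obtain ⟨G, hGinj, hGle, hFG⟩ := exists_injOn_le_image_subset_image hRC hFinj hFle
    have hB : C.image G ∈ univ.filter (SchubertDom · C) :=
      mem_filter.2 ⟨mem_univ _, schubertDom_iff.2 ⟨G, hGinj, hGle, rfl⟩⟩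
    calc #R = #(R.image F) := (card_image_of_injOn hFinj).symm
      _ ≤ #(S ∩ C.image G) := card_le_card (subset_inter (image_subset_iff.2 hFS) hFG)
      _ ≤ schubertRank C S := le_sup (f := fun B => #(S ∩ B)) hB
end

section
/- Let C ⊆ [n], S ⊆ [n] with #S = k, and let π = π_1 ⋯ π_k be any ordering of the elements of S. Construct a filling F_π(C) greedily: for t = 1 to k, place π_t into the topmost (smallest-index) unfilled row i ∈ C with i ≥ π_t, skipping π_t if no such row exists. Then the number of filled rows |F_π(C)| equals r_C(S), the rank of S in the Schubert matroid SM_n(C). In particular |F_π(C)| is independent of the chosen ordering π. -/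
open scoped Classical

/-- One greedy step: place the value `v` into the topmost unfilled row `i ∈ C`
with `i ≥ v`, if any. -/
noncomputable def greedyStep {n : ℕ} (C : Finset (Fin n)) (filled : Finset (Fin n))
    (v : Fin n) : Finset (Fin n) :=
  let avail := (C \ filled).filter (fun i => v ≤ i)
  if h : avail.Nonempty then insert (avail.min' h) filled else filled

/-!
Call `T` tail-dominated by `R` if `#{x ∈ T | t ≤ x} ≤ #{x ∈ R | t ≤ x}` for every `t`. Comparing
sorted lists, the bases of `SM_n(C)` are the sets `B` with `#B = #C` that are tail-dominated by
`C`, so `r_C(S)` is the largest size of a subset of `S` tail-dominated by `C`.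

The greedy filling `F` is at most the rank: the placed elements `D ⊆ S` are tail-dominated by
`F` (each sits at or above its own value), and a placed `v ∈ C` lands in row `v` unless that row
is already filled, so `D ∪ (C \ F)` is a basis meeting `S` in at least `#D = #F` elements.
It is at least the rank: if `T ⊆ S` is tail-dominated by the free rows, the quantity
`#filled + #T` never decreases. Placing `v ∈ T` in the topmost free row `r ≥ v` keeps `T \ {v}`
dominated by the remaining free rows, and placing `v ∉ T` costs at most one element of `T`.
-/

open Finset

namespace List

variable {α : Type*} [LinearOrder α]

theorem Forall₂.countP_le {l₁ l₂ : List α} (h : Forall₂ (· ≤ ·) l₁ l₂) (t : α) :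
    l₁.countP (t ≤ ·) ≤ l₂.countP (t ≤ ·) := by
  induction h with
  | nil => rfl
  | @cons a b _ _ hab _ ih =>
    simp only [countP_cons, decide_eq_true_eq]
    split_ifs with hta htb
    · omega
    · exact absurd (hta.trans hab) htb
    · omega
    · exact ih

theorem forall₂_of_countP_le {l₁ l₂ : List α} (h₁ : l₁.Pairwise (· ≤ ·))
    (h₂ : l₂.Pairwise (· ≤ ·)) (hlen : l₁.length = l₂.length)
    (hcount : ∀ t, l₁.countP (t ≤ ·) ≤ l₂.countP (t ≤ ·)) : Forall₂ (· ≤ ·) l₁ l₂ := by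
  induction l₁ generalizing l₂ with
  | nil => cases l₂ <;> simp_all
  | cons a t₁ ih =>
    obtain _ | ⟨b, t₂⟩ := l₂
    · simp at hlen
    rw [pairwise_cons] at h₁ h₂
    simp only [length_cons, Nat.add_right_cancel_iff] at hlen
    have hhead : a ≤ b := by
      by_contra hba
      have hall : (a :: t₁).countP (a ≤ ·) = t₁.length + 1 :=
        countP_eq_length.2 fun x hx => by
          rcases mem_cons.1 hx with rfl | hx
          exacts [decide_eq_true le_rfl, decide_eq_true (h₁.1 x hx)]
      have := hcount a
      rw [hall, countP_cons, if_neg (by simpa using hba)] at this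
      have := countP_le_length (p := (a ≤ ·)) (l := t₂)
      omega
    refine .cons hhead (ih h₁.2 h₂.2 hlen fun t => ?_)
    by_cases htb : t ≤ b
    · rw [countP_eq_length.2 fun x hx => decide_eq_true (htb.trans (h₂.1 x hx)), ← hlen]
      exact countP_le_length
    · have := hcount t
      simp only [countP_cons, decide_eq_true_eq, if_neg htb] at this
      omega

end List

section TailDominated

variable {α : Type*} [LinearOrder α]

/-- Hall's condition for matching `T` injectively into `R` with every `x` sent to some `r ≥ x`. -/
def TailDominated (T R : Finset α) : Prop :=
  ∀ t, #{x ∈ T | t ≤ x} ≤ #{x ∈ R | t ≤ x}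

variable {T T' R : Finset α}

theorem card_filter_eq_countP_sort (s : Finset α) (t : α) :
    #{x ∈ s | t ≤ x} = (s.sort (· ≤ ·)).countP (t ≤ ·) := by
  rw [← Multiset.coe_countP, sort_eq, Multiset.countP_eq_card_filter]
  rfl

theorem TailDominated.mono_left (h : TailDominated T R) (hT : T' ⊆ T) : TailDominated T' R :=
  fun t => (card_le_card (filter_subset_filter _ hT)).trans (h t)

theorem TailDominated.insert {a b : α} (h : TailDominated T R) (ha : a ∉ T) (hb : b ∉ R)
    (hab : a ≤ b) : TailDominated (insert a T) (insert b R) := by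
  intro t
  rw [filter_insert, filter_insert]
  split_ifs with hta htb
  · rw [card_insert_of_notMem (by simp [ha]), card_insert_of_notMem (by simp [hb])]
    exact Nat.add_le_add_right (h t) 1
  · exact absurd (hta.trans hab) htb
  · exact (h t).trans (card_le_card (subset_insert _ _))
  · exact h t

theorem TailDominated.union {E : Finset α} (h : TailDominated T R) (hT : Disjoint T E)
    (hR : Disjoint R E) : TailDominated (T ∪ E) (R ∪ E) := by
  intro t
  rw [filter_union, filter_union, card_union_of_disjoint (disjoint_filter_filter hT),
    card_union_of_disjoint (disjoint_filter_filter hR)]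
  exact Nat.add_le_add_right (h t) _

theorem TailDominated.card_filter_lt_le (h : TailDominated T R) (r : α) :
    #{x ∈ T | r < x} ≤ #{x ∈ R | r < x} := by
  by_cases hT : {x ∈ T | r < x}.Nonempty
  · set s := min' _ hT
    have hrs : r < s := (mem_filter.1 (min'_mem _ hT)).2
    have hTs : {x ∈ T | r < x} = {x ∈ T | s ≤ x} :=
      filter_congr fun x hx =>
        ⟨fun hrx => min'_le _ _ (mem_filter.2 ⟨hx, hrx⟩), fun hsx => hrs.trans_le hsx⟩
    rw [hTs]
    exact (h s).trans (card_le_card (monotone_filter_right _ fun x _ hsx => hrs.trans_le hsx))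
  · simp [not_nonempty_iff_eq_empty.1 hT]

theorem TailDominated.erase_right {r : α} (h : TailDominated T R) (hr : r ∈ R) (hT' : T' ⊆ T)
    (hslack : ∀ t ≤ r, #{x ∈ T' | t ≤ x} < #{x ∈ T | t ≤ x} ∨
      #{x ∈ T | t ≤ x} < #{x ∈ R | t ≤ x}) :
    TailDominated T' (R.erase r) := by
  intro t
  have hsub : #{x ∈ T' | t ≤ x} ≤ #{x ∈ T | t ≤ x} := card_le_card (filter_subset_filter _ hT')
  by_cases htr : t ≤ r
  · have hfree : #{x ∈ R.erase r | t ≤ x} + 1 = #{x ∈ R | t ≤ x} := by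
      rw [filter_erase]
      exact card_erase_add_one (mem_filter.2 ⟨hr, htr⟩)
    have := h t
    rcases hslack t htr with _ | _ <;> omega
  · rw [filter_erase, erase_eq_of_notMem (by simp [htr])]
    exact hsub.trans (h t)

theorem TailDominated.erase_erase {v r : α} (h : TailDominated T R) (hv : v ∈ T) (hr : r ∈ R)
    (hmin : ∀ x ∈ R, v ≤ x → r ≤ x) : TailDominated (T.erase v) (R.erase r) := by
  refine h.erase_right hr (erase_subset v T) fun t htr => ?_
  by_cases htv : t ≤ v
  · left
    rw [filter_erase]
    exact card_erase_lt_of_mem (mem_filter.2 ⟨hv, htv⟩)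
  · right
    rw [not_le] at htv
    have hRt : {x ∈ R | t ≤ x} = {x ∈ R | v ≤ x} :=
      filter_congr fun x hx => ⟨fun htx => htv.le.trans htx, fun hvx => htr.trans (hmin x hx hvx)⟩
    calc #{x ∈ T | t ≤ x} < #{x ∈ T | v ≤ x} :=
          card_lt_card ⟨monotone_filter_right _ fun x _ htx => htv.le.trans htx,
            fun hsub => absurd (mem_filter.1 (hsub (mem_filter.2 ⟨hv, le_rfl⟩))).2 (not_le.2 htv)⟩
      _ ≤ #{x ∈ R | t ≤ x} := hRt ▸ h v

/-- The dropped element is the largest element of `T` below `r`, if there is one. -/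
theorem TailDominated.exists_subset_erase_right {r : α} (h : TailDominated T R) (hr : r ∈ R) :
    ∃ T' ⊆ T, #T ≤ #T' + 1 ∧ TailDominated T' (R.erase r) := by
  have hgap : ∀ t ≤ r, (∀ x ∈ T, t ≤ x → r < x) → #{x ∈ T | t ≤ x} < #{x ∈ R | t ≤ x} := by
    intro t htr hT
    calc #{x ∈ T | t ≤ x} ≤ #{x ∈ T | r < x} :=
          card_le_card fun x hx => by
            simp only [mem_filter] at hx ⊢
            exact ⟨hx.1, hT x hx.1 hx.2⟩
      _ ≤ #{x ∈ R | r < x} := h.card_filter_lt_le r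
      _ < #{x ∈ R | t ≤ x} :=
          card_lt_card ⟨monotone_filter_right _ fun x _ hrx => htr.trans hrx.le,
            fun hsub => lt_irrefl r (mem_filter.1 (hsub (mem_filter.2 ⟨hr, htr⟩))).2⟩
  by_cases hlow : {x ∈ T | x ≤ r}.Nonempty
  · set w := max' _ hlow
    have hw : w ∈ T := (mem_filter.1 (max'_mem _ hlow)).1
    refine ⟨T.erase w, erase_subset w T, (card_erase_add_one hw).ge,
      h.erase_right hr (erase_subset w T) fun t htr => ?_⟩
    by_cases htw : t ≤ w
    · left
      rw [filter_erase]
      exact card_erase_lt_of_mem (mem_filter.2 ⟨hw, htw⟩)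
    · right
      refine hgap t htr fun x hx htx => not_le.1 fun hxr => htw ?_
      exact htx.trans (le_max' _ x (mem_filter.2 ⟨hx, hxr⟩))
  · refine ⟨T, subset_rfl, Nat.le_succ _, h.erase_right hr subset_rfl fun t htr => .inr ?_⟩
    exact hgap t htr fun x hx _ => not_le.1 fun hxr => hlow ⟨x, mem_filter.2 ⟨hx, hxr⟩⟩

end TailDominated

section SchubertMatroid

variable {n : ℕ} {B C S : Finset (Fin n)}

theorem schubertDom_iff_s7 : SchubertDom B C ↔ #B = #C ∧ TailDominated B C := by
  simp only [SchubertDom, TailDominated, card_filter_eq_countP_sort]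
  refine ⟨fun h => ⟨by simpa using h.length_eq, h.countP_le⟩, fun ⟨hcard, hcount⟩ => ?_⟩
  exact List.forall₂_of_countP_le (pairwise_sort _ _) (pairwise_sort _ _)
    (by simpa using hcard) hcount

theorem schubertRank_le {m : ℕ} (h : ∀ T ⊆ S, TailDominated T C → #T ≤ m) :
    schubertRank C S ≤ m :=
  Finset.sup_le fun _ hB =>
    h _ inter_subset_left ((schubertDom_iff_s7.1 (mem_filter.1 hB).2).2.mono_left inter_subset_right)

/-- The witnessing basis is `D ∪ (C \ F)`, a disjoint union because `D ∩ C ⊆ F`. -/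
theorem card_le_schubertRank {D F : Finset (Fin n)} (hDS : D ⊆ S) (hFC : F ⊆ C)
    (hcard : #D = #F) (hdom : TailDominated D F) (hDC : D ∩ C ⊆ F) :
    #D ≤ schubertRank C S := by
  have hdisj : Disjoint D (C \ F) := disjoint_left.2 fun x hxD hx =>
    (mem_sdiff.1 hx).2 (hDC (mem_inter.2 ⟨hxD, (mem_sdiff.1 hx).1⟩))
  have hC : F ∪ C \ F = C := union_sdiff_of_subset hFC
  have hbasis : SchubertDom (D ∪ C \ F) C := by
    have hdom' := hdom.union hdisj disjoint_sdiff
    rw [hC] at hdom'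
    refine schubertDom_iff_s7.2 ⟨?_, hdom'⟩
    rw [card_union_of_disjoint hdisj, hcard, ← card_union_of_disjoint disjoint_sdiff, hC]
  calc #D ≤ #(S ∩ (D ∪ C \ F)) := card_le_card (subset_inter hDS subset_union_left)
    _ ≤ schubertRank C S :=
        le_sup (f := fun B => #(S ∩ B)) (mem_filter.2 ⟨mem_univ _, hbasis⟩)

end SchubertMatroid

section Greedy

variable {n : ℕ} (C : Finset (Fin n))

theorem greedyStep_cases (F : Finset (Fin n)) (v : Fin n) :
    (∀ x ∈ C \ F, ¬v ≤ x) ∧ greedyStep C F v = F ∨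
      ∃ r ∈ C \ F, v ≤ r ∧ (∀ x ∈ C \ F, v ≤ x → r ≤ x) ∧ greedyStep C F v = insert r F := by
  unfold greedyStep
  dsimp only
  split_ifs with h
  · have hr := mem_filter.1 (min'_mem _ h)
    exact .inr ⟨_, hr.1, hr.2, fun x hx hvx => min'_le _ _ (mem_filter.2 ⟨hx, hvx⟩), rfl⟩
  · exact .inl ⟨fun x hx hvx => h ⟨x, mem_filter.2 ⟨hx, hvx⟩⟩, rfl⟩

theorem subset_foldl_greedyStep (l : List (Fin n)) (F : Finset (Fin n)) :
    F ⊆ l.foldl (greedyStep C) F := by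
  induction l generalizing F with
  | nil => exact subset_rfl
  | cons v l ih =>
    rcases greedyStep_cases C F v with ⟨-, hstep⟩ | ⟨r, -, -, -, hstep⟩
    · simpa [hstep] using ih F
    · simpa [hstep] using (subset_insert r F).trans (ih _)

theorem foldl_greedyStep_subset (l : List (Fin n)) (F : Finset (Fin n)) :
    l.foldl (greedyStep C) F ⊆ C ∪ F := by
  induction l generalizing F with
  | nil => exact subset_union_right
  | cons v l ih =>
    rcases greedyStep_cases C F v with ⟨-, hstep⟩ | ⟨r, hr, -, -, hstep⟩
    · simpa [hstep] using ih F
    · rw [List.foldl_cons, hstep]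
      refine (ih _).trans (union_subset subset_union_left ?_)
      exact insert_subset (mem_union_left _ (mem_sdiff.1 hr).1) subset_union_right

/-- The elements placed by the greedy algorithm are matched onto the newly filled rows. -/
theorem exists_placed_of_nodup (l : List (Fin n)) (hl : l.Nodup) (F : Finset (Fin n)) :
    ∃ D ⊆ l.toFinset, #D = #(l.foldl (greedyStep C) F \ F) ∧
      TailDominated D (l.foldl (greedyStep C) F \ F) ∧ D ∩ C ⊆ l.foldl (greedyStep C) F := by
  induction l generalizing F with
  | nil => exact ⟨∅, by simp, by simp, fun t => by simp, by simp⟩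
  | cons v l ih =>
    obtain ⟨hvl, hl⟩ := List.nodup_cons.1 hl
    rcases greedyStep_cases C F v with ⟨-, hstep⟩ | ⟨r, hr, hvr, hmin, hstep⟩
    · obtain ⟨D, hD, hrest⟩ := ih hl F
      exact ⟨D, hD.trans (by simp [subset_insert]), by simpa [hstep] using hrest⟩
    obtain ⟨D, hD, hcard, hdom, hDC⟩ := ih hl (insert r F)
    set G := l.foldl (greedyStep C) (insert r F)
    have hrG : r ∈ G \ F :=
      mem_sdiff.2 ⟨subset_foldl_greedyStep C l _ (mem_insert_self r F), (mem_sdiff.1 hr).2⟩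
    have hvD : v ∉ D := fun hv => hvl (List.mem_toFinset.1 (hD hv))
    rw [sdiff_insert] at hcard hdom
    have hvG : v ∈ C → v ∈ G := fun hvC => by
      by_cases hvF : v ∈ F
      · exact subset_foldl_greedyStep C l _ (mem_insert_of_mem hvF)
      · have hrv : r = v := le_antisymm (hmin v (mem_sdiff.2 ⟨hvC, hvF⟩) le_rfl) hvr
        exact subset_foldl_greedyStep C l _ (hrv ▸ mem_insert_self r F)
    simp only [List.foldl_cons, hstep]
    refine ⟨insert v D, ?_, ?_, ?_, ?_⟩
    · simpa using insert_subset_insert v hD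
    · rw [card_insert_of_notMem hvD, hcard, card_erase_add_one hrG]
    · simpa [insert_erase hrG] using hdom.insert hvD (notMem_erase r _) hvr
    · intro x hx
      obtain ⟨hxD, hxC⟩ := mem_inter.1 hx
      rcases mem_insert.1 hxD with rfl | hxD
      exacts [hvG hxC, hDC (mem_inter.2 ⟨hxD, hxC⟩)]

/-- Greedy placement never loses against a fixed matching of `T` into the free rows: when it
takes a row that `T` needed, an exchange frees another one. -/
theorem card_add_card_le_card_foldl_greedyStep (l : List (Fin n)) (F T : Finset (Fin n))
    (hT : T ⊆ l.toFinset) (h : TailDominated T (C \ F)) :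
    #F + #T ≤ #(l.foldl (greedyStep C) F) := by
  induction l generalizing F T with
  | nil => simp [subset_empty.1 hT]
  | cons v l ih =>
    rw [List.toFinset_cons, subset_insert_iff] at hT
    rcases greedyStep_cases C F v with ⟨hblocked, hstep⟩ | ⟨r, hr, -, hmin, hstep⟩
    · have hvT : v ∉ T := fun hv => by
        have := h v
        rw [filter_eq_empty_iff.2 hblocked, card_empty, Nat.le_zero, card_eq_zero] at this
        exact notMem_empty v (this ▸ mem_filter.2 ⟨hv, le_rfl⟩)
      rw [List.foldl_cons, hstep]
      exact ih F T (erase_eq_of_notMem hvT ▸ hT) h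
    rw [List.foldl_cons, hstep]
    have hrF : r ∉ F := (mem_sdiff.1 hr).2
    have hfree : C \ insert r F = (C \ F).erase r := sdiff_insert C F r
    by_cases hvT : v ∈ T
    · have := ih _ _ hT (hfree ▸ h.erase_erase hvT hr hmin)
      rw [card_insert_of_notMem hrF] at this
      have := card_erase_add_one hvT
      omega
    · obtain ⟨T', hT'T, hcard, hdom⟩ := h.exists_subset_erase_right hr
      have := ih _ T' (hT'T.trans (erase_eq_of_notMem hvT ▸ hT)) (hfree ▸ hdom)
      rw [card_insert_of_notMem hrF] at this
      omega

end Greedy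

/-- For any ordering `π` of the elements of `S`, the number of rows filled by
the greedy algorithm on the column `C` equals the rank `r_C(S)` of `S` in the
Schubert matroid `SM_n(C)`; in particular it does not depend on `π`. -/
theorem greedy_filling_card_eq_rank (n : ℕ) (C S : Finset (Fin n))
    (π : List (Fin n)) (hnd : π.Nodup) (hπ : π.toFinset = S) :
    (π.foldl (greedyStep C) ∅).card = schubertRank C S := by
  refine le_antisymm ?_ (schubertRank_le fun T hTS hT => ?_)
  · obtain ⟨D, hD, hcard, hdom, hDC⟩ := exists_placed_of_nodup C π hnd ∅
    rw [sdiff_empty] at hcard hdom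
    rw [← hcard]
    exact card_le_schubertRank (hπ ▸ hD) (by simpa using foldl_greedyStep_subset C π ∅)
      hcard hdom hDC
  · simpa using card_add_card_le_card_foldl_greedyStep C π ∅ T (hπ ▸ hTS) (by simpa using hT)
end

section
/- Let D be a diagram in the n×n grid with columns D_1,...,D_n (each D_j ⊆ [n] a set of row indices), and define r_D(S) = Σ_j r_{D_j}(S), where r_{D_j} is the rank function of the Schubert matroid SM_n(D_j). Then for each j and S ⊆ [n], r_{D_j}(S) = θ_{D}^j(S), the number of paired '()' plus the number of '*' in the column word word_{j,S}(D). -/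
/-!
`schubertRank C S` is the largest `#(S ∩ B)` over the sets `B` dominated by `C`, and `B` is
dominated by `C` iff `#B = #C` and every initial segment of rows meets `B` at least as often as
`C`. Let `u` be the row just after the last unmatched `)` of the column word. A dominated `B`
has at most as many rows `≥ u` as `C`, so `#(S ∩ B) ≤ #(S ∩ [0, u)) + #(C ∩ [u, n))`, and the
scan of the word shows that `θ` equals this bound. Conversely, replacing in `C` the `)` row of
each matched pair by its `(` row gives a dominated `B` with `#(S ∩ B) = #(S ∩ C) + #pairs = θ`.
-/

open scoped Classical

/-- `θ_D^j(S)`: the number of matched `()` pairs (inside-out matching) plus the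
number of `*`'s in the word of column `C = D_j` with respect to `S`, read from
top to bottom: `(` for a non-box row in `S`, `)` for a box row not in `S`, `*`
for a box row in `S`. -/
def thetaCol {n : ℕ} (C S : Finset (Fin n)) : ℕ :=
  ((List.finRange n).foldl
    (fun st i =>
      if i ∈ C then
        (if i ∈ S then (st.1, st.2 + 1)
         else if 0 < st.1 then (st.1 - 1, st.2 + 1) else st)
      else (if i ∈ S then (st.1 + 1, st.2) else st))
    ((0, 0) : ℕ × ℕ)).2

open Finset

namespace List

variable {α β : Type*}

theorem Forall₂.countP_le_countP {R : α → β → Prop} {p : α → Bool} {q : β → Bool}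
    (hpq : ∀ a b, R a b → q b → p a) {l₁ : List α} {l₂ : List β} (h : Forall₂ R l₁ l₂) :
    l₂.countP q ≤ l₁.countP p := by
  induction h with
  | nil => simp
  | @cons a b _ _ hab _ ih =>
    rw [countP_cons, countP_cons]
    by_cases hb : q b
    · simp [hb, hpq a b hab hb, ih]
    · simp only [hb, Bool.false_eq_true, if_false, Nat.add_zero]
      split_ifs <;> omega

theorem forall₂_le_of_countP_le [LinearOrder α] {l₁ l₂ : List α}
    (h₁ : l₁.Pairwise (· ≤ ·)) (h₂ : l₂.Pairwise (· ≤ ·)) (hlen : l₁.length = l₂.length)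
    (hcount : ∀ c, l₂.countP (· ≤ c) ≤ l₁.countP (· ≤ c)) : Forall₂ (· ≤ ·) l₁ l₂ := by
  induction l₁ generalizing l₂ with
  | nil => cases l₂ <;> simp_all
  | cons b l₁ ih =>
    obtain _ | ⟨c, l₂⟩ := l₂
    · simp at hlen
    rw [pairwise_cons] at h₁ h₂
    have hbc : b ≤ c := by
      have hpos : 0 < (c :: l₂).countP (· ≤ c) := by simp
      obtain ⟨x, hx, hxc⟩ : ∃ x ∈ b :: l₁, x ≤ c := by
        simpa [countP_pos_iff] using hpos.trans_le (hcount c)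
      rcases mem_cons.mp hx with rfl | hx
      exacts [hxc, (h₁.1 x hx).trans hxc]
    refine .cons hbc (ih h₁.2 h₂.2 (by simpa using hlen) fun τ => ?_)
    by_cases hcτ : c ≤ τ
    · simpa [countP_cons, hcτ, hbc.trans hcτ] using hcount τ
    · have : l₂.countP (· ≤ τ) = 0 :=
        countP_eq_zero.mpr fun x hx hxτ => hcτ ((h₂.1 x hx).trans (by simpa using hxτ))
      omega

end List

variable {n : ℕ}

def countBelow (T : Finset (Fin n)) (u : ℕ) : ℕ := #{i ∈ T | i.val < u}

theorem card_filter_eq_countP_sort_s16 {α : Type*} [LinearOrder α] (T : Finset α) (p : α → Prop)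
    [DecidablePred p] : #{x ∈ T | p x} = (T.sort (· ≤ ·)).countP (p ·) := by
  rw [← Multiset.coe_countP, Finset.sort_eq, Multiset.countP_eq_card_filter]
  rfl

theorem schubertDom_iff_countBelow {B C : Finset (Fin n)} :
    SchubertDom B C ↔ #B = #C ∧ ∀ u, countBelow C u ≤ countBelow B u := by
  refine ⟨fun h => ⟨?_, fun u => ?_⟩, fun ⟨hcard, hcount⟩ => ?_⟩
  · simpa using h.length_eq
  · simp only [countBelow, card_filter_eq_countP_sort_s16]
    exact h.countP_le_countP fun a b hab hb => by simp_all; omega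
  · refine List.forall₂_le_of_countP_le (pairwise_sort _ _) (pairwise_sort _ _)
      (by simpa using hcard) fun c => ?_
    have h : ∀ T : Finset (Fin n), #{x ∈ T | x ≤ c} = countBelow T (c.val + 1) := fun T => by
      simp only [countBelow, Nat.lt_succ_iff, Fin.le_def]
    simpa only [← card_filter_eq_countP_sort_s16, h] using hcount (c.val + 1)

@[simp]
theorem countBelow_zero (T : Finset (Fin n)) : countBelow T 0 = 0 := by
  simp [countBelow]

theorem countBelow_le_card (T : Finset (Fin n)) (u : ℕ) : countBelow T u ≤ #T :=
  card_filter_le _ _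

theorem countBelow_of_le (T : Finset (Fin n)) {u : ℕ} (hu : n ≤ u) : countBelow T u = #T := by
  rw [countBelow, filter_true_of_mem fun i _ => i.isLt.trans_le hu]

theorem countBelow_insert {T : Finset (Fin n)} {a : Fin n} (ha : a ∉ T) (u : ℕ) :
    countBelow (insert a T) u = countBelow T u + if a.val < u then 1 else 0 := by
  unfold countBelow
  rw [filter_insert]
  split_ifs
  · exact card_insert_of_notMem fun h => ha (mem_filter.mp h).1
  · rfl

theorem countBelow_succ (T : Finset (Fin n)) (i : Fin n) :
    countBelow T (i.val + 1) = countBelow T i + if i ∈ T then 1 else 0 := by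
  have : {x ∈ T | x.val < i.val + 1} = {x ∈ T | x.val < i.val} ∪ {x ∈ T | x = i} := by
    ext x
    simp only [mem_filter, mem_union, Fin.ext_iff, Nat.lt_succ_iff_lt_or_eq, and_or_left]
  rw [countBelow, countBelow, this, card_union_of_disjoint
    (disjoint_filter.mpr fun x _ hx h => by simp [h] at hx), filter_eq']
  split_ifs <;> simp

theorem countBelow_union {X Y : Finset (Fin n)} (h : Disjoint X Y) (u : ℕ) :
    countBelow (X ∪ Y) u = countBelow X u + countBelow Y u := by
  rw [countBelow, filter_union, card_union_of_disjoint (disjoint_filter_filter h)]; rfl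

theorem countBelow_sdiff_add_inter (S C : Finset (Fin n)) (u : ℕ) :
    countBelow (S \ C) u + countBelow (S ∩ C) u = countBelow S u := by
  rw [← countBelow_union (disjoint_sdiff_inter S C), sdiff_union_inter]

namespace SchubertDom

theorem insert {B C : Finset (Fin n)} {a c : Fin n} (h : SchubertDom B C) (ha : a ∉ B)
    (hc : c ∉ C) (hac : a ≤ c) : SchubertDom (insert a B) (insert c C) := by
  obtain ⟨hcard, hcount⟩ := schubertDom_iff_countBelow.mp h
  refine schubertDom_iff_countBelow.mpr ⟨by simp [ha, hc, hcard], fun u => ?_⟩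
  have := hcount u
  have : c.val < u → a.val < u := (Fin.le_def.mp hac).trans_lt
  rw [countBelow_insert ha, countBelow_insert hc]
  split_ifs <;> omega

theorem sdiff_union {C X Y : Finset (Fin n)} (h : SchubertDom X Y) (hX : Disjoint X C)
    (hY : Y ⊆ C) : SchubertDom (C \ Y ∪ X) C := by
  obtain ⟨hcard, hcount⟩ := schubertDom_iff_countBelow.mp h
  have hdisj : Disjoint (C \ Y) X := hX.symm.mono_left sdiff_subset
  refine schubertDom_iff_countBelow.mpr ⟨?_, fun u => ?_⟩
  · have := card_sdiff_add_card_eq_card hY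
    rw [card_union_of_disjoint hdisj]
    omega
  · have := countBelow_sdiff_add_inter C Y u
    rw [inter_eq_right.mpr hY] at this
    have := hcount u
    rw [countBelow_union hdisj]
    omega

end SchubertDom

theorem schubertRank_add_countBelow_le (C S : Finset (Fin n)) (u : ℕ) :
    schubertRank C S + countBelow C u ≤ countBelow S u + #C := by
  suffices h : ∀ B, SchubertDom B C → #(S ∩ B) + countBelow C u ≤ countBelow S u + #C by
    have : schubertRank C S ≤ countBelow S u + #C - countBelow C u :=
      Finset.sup_le fun B hB => by have := h B (mem_filter.mp hB).2; omega
    have := countBelow_le_card C u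
    omega
  intro B hB
  obtain ⟨hcard, hcount⟩ := schubertDom_iff_countBelow.mp hB
  have hlow : #{i ∈ S ∩ B | i.val < u} ≤ countBelow S u :=
    card_le_card (filter_subset_filter _ inter_subset_left)
  have hhigh : #{i ∈ S ∩ B | ¬ i.val < u} ≤ #{i ∈ B | ¬ i.val < u} :=
    card_le_card (filter_subset_filter _ inter_subset_right)
  have := card_filter_add_card_filter_not (s := S ∩ B) (fun i : Fin n => i.val < u)
  have := card_filter_add_card_filter_not (s := B) (fun i : Fin n => i.val < u)
  have := hcount u
  unfold countBelow at *
  omega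

theorem card_inter_add_card_le_schubertRank {C S X Y : Finset (Fin n)} (hXY : SchubertDom X Y)
    (hX : X ⊆ S \ C) (hY : Y ⊆ C \ S) : #(S ∩ C) + #X ≤ schubertRank C S := by
  have hXC : Disjoint X C := disjoint_of_subset_left hX sdiff_disjoint
  have hB : SchubertDom (C \ Y ∪ X) C := hXY.sdiff_union hXC (hY.trans sdiff_subset)
  have hsub : S ∩ C ∪ X ⊆ S ∩ (C \ Y ∪ X) := by
    intro x hx
    have := @hX x
    have := @hY x
    simp only [mem_union, mem_inter, mem_sdiff] at *
    tauto
  calc #(S ∩ C) + #X = #(S ∩ C ∪ X) :=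
        (card_union_of_disjoint (hXC.symm.mono_left inter_subset_right)).symm
    _ ≤ #(S ∩ (C \ Y ∪ X)) := card_le_card hsub
    _ ≤ schubertRank C S := le_sup (f := fun B => #(S ∩ B)) (mem_filter.mpr ⟨mem_univ _, hB⟩)

def colStep (C S : Finset (Fin n)) (st : ℕ × ℕ) (i : Fin n) : ℕ × ℕ :=
  if i ∈ C then
    (if i ∈ S then (st.1, st.2 + 1)
     else if 0 < st.1 then (st.1 - 1, st.2 + 1) else st)
  else (if i ∈ S then (st.1 + 1, st.2) else st)

/-- `colState C S t = (o, m)`: after reading the rows `< t`, `o` is the number of unmatched `(`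
and `m` the number of matched pairs plus `*`s. -/
def colState (C S : Finset (Fin n)) (t : ℕ) : ℕ × ℕ :=
  ((List.finRange n).take t).foldl (colStep C S) (0, 0)

theorem thetaCol_eq_colState (C S : Finset (Fin n)) : thetaCol C S = (colState C S n).2 := by
  rw [colState, List.take_of_length_le (by simp)]
  rfl

theorem colState_zero (C S : Finset (Fin n)) : colState C S 0 = (0, 0) := rfl

theorem colState_succ (C S : Finset (Fin n)) (i : Fin n) :
    colState C S (i.val + 1) = colStep C S (colState C S i) i := by
  simp [colState, List.take_add_one]

theorem colState_fst_add_snd (C S : Finset (Fin n)) {t : ℕ} (ht : t ≤ n) :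
    (colState C S t).1 + (colState C S t).2 = countBelow S t := by
  induction t with
  | zero => simp [colState_zero]
  | succ t ih =>
    obtain ⟨i, rfl⟩ : ∃ i : Fin n, i.val = t := ⟨⟨t, ht⟩, rfl⟩
    rw [colState_succ, countBelow_succ, ← ih i.isLt.le, colStep]
    split_ifs <;> simp_all <;> omega

/-- `u` is the row just after the last unmatched `)`. -/
theorem exists_colState_snd_add_countBelow (C S : Finset (Fin n)) {t : ℕ} (ht : t ≤ n) :
    ∃ u ≤ t, (colState C S t).2 + countBelow C u = countBelow S u + countBelow C t := by
  induction t with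
  | zero => exact ⟨0, le_rfl, by simp [colState_zero]⟩
  | succ t ih =>
    obtain ⟨i, rfl⟩ : ∃ i : Fin n, i.val = t := ⟨⟨t, ht⟩, rfl⟩
    obtain ⟨u, hu, h⟩ := ih i.isLt.le
    have hsum := colState_fst_add_snd C S i.isLt.le
    have hC := countBelow_succ C i
    have hS := countBelow_succ S i
    by_cases hunmatched : i ∈ C ∧ i ∉ S ∧ (colState C S i).1 = 0
    · refine ⟨i + 1, le_rfl, ?_⟩
      simp_all [colState_succ, colStep]
    · refine ⟨u, by omega, ?_⟩
      rw [colState_succ, colStep]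
      split_ifs at hC hS ⊢ <;> simp_all <;> omega

/-- `X` and `Y` are the rows of the matched `(` and `)`. -/
theorem exists_schubertDom_colState_snd_eq (C S : Finset (Fin n)) {t : ℕ} (ht : t ≤ n) :
    ∃ X Y, SchubertDom X Y ∧ X ⊆ S \ C ∧ Y ⊆ C \ S ∧ (∀ y ∈ Y, y.val < t) ∧
      (colState C S t).2 = countBelow (S ∩ C) t + #X := by
  induction t with
  | zero => exact ⟨∅, ∅, by simp [SchubertDom], empty_subset _, empty_subset _, by simp,
      by simp [colState_zero]⟩
  | succ t ih =>
    obtain ⟨i, rfl⟩ : ∃ i : Fin n, i.val = t := ⟨⟨t, ht⟩, rfl⟩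
    obtain ⟨X, Y, hXY, hX, hY, hYt, hm⟩ := ih i.isLt.le
    have hcount := countBelow_succ (S ∩ C) i
    by_cases hmatched : i ∈ C ∧ i ∉ S ∧ 0 < (colState C S i).1
    · obtain ⟨p, hp, hpX⟩ : ∃ p ∈ {x ∈ S \ C | x.val < i.val}, p ∉ X := by
        refine exists_mem_notMem_of_card_lt_card ?_
        have := colState_fst_add_snd C S i.isLt.le
        have := countBelow_sdiff_add_inter S C i
        unfold countBelow at *
        omega
      rw [mem_filter] at hp
      have hiY : i ∉ Y := fun h => (hYt i h).false
      refine ⟨insert p X, insert i Y, hXY.insert hpX hiY (Fin.le_def.mpr hp.2.le),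
        insert_subset hp.1 hX, insert_subset (by simp [hmatched]) hY,
        fun y hy => ?_, ?_⟩
      · rcases mem_insert.mp hy with rfl | hy
        exacts [Nat.lt_succ_self _, (hYt y hy).trans (Nat.lt_succ_self _)]
      · simp_all [colState_succ, colStep, card_insert_of_notMem hpX, add_assoc]
    · refine ⟨X, Y, hXY, hX, hY, fun y hy => (hYt y hy).trans (Nat.lt_succ_self _), ?_⟩
      rw [colState_succ, colStep]
      split_ifs at hcount ⊢ <;> simp_all [add_right_comm]

theorem schubertRank_eq_thetaCol (C S : Finset (Fin n)) : schubertRank C S = thetaCol C S := by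
  rw [thetaCol_eq_colState]
  apply le_antisymm
  · obtain ⟨u, -, hu⟩ := exists_colState_snd_add_countBelow C S le_rfl
    have := schubertRank_add_countBelow_le C S u
    rw [countBelow_of_le C le_rfl] at hu
    omega
  · obtain ⟨X, Y, hXY, hX, hY, -, hθ⟩ := exists_schubertDom_colState_snd_eq C S le_rfl
    rw [hθ, countBelow_of_le _ le_rfl]
    exact card_inter_add_card_le_schubertRank hXY hX hY

/-- For a diagram with columns `D j`, the rank function of the Schubert matroid
of each column equals the parenthesis-matching statistic `θ_D^j`. -/
theorem schubertRank_eq_theta (n : ℕ) (D : Fin n → Finset (Fin n)) :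
    ∀ (j : Fin n) (S : Finset (Fin n)), schubertRank (D j) S = thetaCol (D j) S :=
  fun j S => schubertRank_eq_thetaCol (D j) S
end
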